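/- Let A and B be k-algebras and ψ : B ⊗ A → A ⊗ B a k-linear map such that the cross product A #_ψ B (multiplication (a⊗b)(a'⊗b') = (m_A⊗m_B)(id⊗ψ⊗id), unit 1⊗1) is an associative unital algebra. If ε_B : B → k is an algebra homomorphism, then the map B ⊗ A → A defined by b ⊗ a ↦ (id_A ⊗ ε_B)(ψ(b ⊗ a)) makes A into a left B-module (i.e. 1_B acts as the identity and (bb')·a = b·(b'·a)). -/
import Mathlib


open TensorProduct

variable {k A B : Type*} [CommRing k] [Ring A] [Ring B] [Algebra k A] [Algebra k B]

/-- The cross product multiplication on `A ⊗ B` induced by `ψ : B ⊗ A → A ⊗ B`. -/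
noncomputable def crossMul (ψ : B ⊗[k] A →ₗ[k] A ⊗[k] B) :
    (A ⊗[k] B) ⊗[k] (A ⊗[k] B) →ₗ[k] A ⊗[k] B :=
  TensorProduct.map (LinearMap.mul' k A) (LinearMap.mul' k B) ∘ₗ
    (TensorProduct.assoc k (A ⊗[k] A) B B).toLinearMap ∘ₗ
    TensorProduct.map
      ((TensorProduct.assoc k A A B).symm.toLinearMap ∘ₗ
        TensorProduct.map (LinearMap.id : A →ₗ[k] A) ψ ∘ₗ
        (TensorProduct.assoc k A B A).toLinearMap)
      (LinearMap.id : B →ₗ[k] B) ∘ₗ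
    (TensorProduct.assoc k (A ⊗[k] B) A B).symm.toLinearMap

/-- (a): `ψ ∘ (m_B ⊗ id_A) = (id_A ⊗ m_B) ∘ (ψ ⊗ id_B) ∘ (id_B ⊗ ψ)`. -/
def psiCondA (ψ : B ⊗[k] A →ₗ[k] A ⊗[k] B) : Prop :=
  ψ ∘ₗ TensorProduct.map (LinearMap.mul' k B) (LinearMap.id : A →ₗ[k] A) =
    TensorProduct.map (LinearMap.id : A →ₗ[k] A) (LinearMap.mul' k B) ∘ₗ
      (TensorProduct.assoc k A B B).toLinearMap ∘ₗ
      TensorProduct.map ψ (LinearMap.id : B →ₗ[k] B) ∘ₗ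
      (TensorProduct.assoc k B A B).symm.toLinearMap ∘ₗ
      TensorProduct.map (LinearMap.id : B →ₗ[k] B) ψ ∘ₗ
      (TensorProduct.assoc k B B A).toLinearMap

/-- (b): `ψ ∘ (id_B ⊗ m_A) = (m_A ⊗ id_B) ∘ (id_A ⊗ ψ) ∘ (ψ ⊗ id_A)`. -/
def psiCondB (ψ : B ⊗[k] A →ₗ[k] A ⊗[k] B) : Prop :=
  ψ ∘ₗ TensorProduct.map (LinearMap.id : B →ₗ[k] B) (LinearMap.mul' k A) =
    TensorProduct.map (LinearMap.mul' k A) (LinearMap.id : B →ₗ[k] B) ∘ₗ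
      (TensorProduct.assoc k A A B).symm.toLinearMap ∘ₗ
      TensorProduct.map (LinearMap.id : A →ₗ[k] A) ψ ∘ₗ
      (TensorProduct.assoc k A B A).toLinearMap ∘ₗ
      TensorProduct.map ψ (LinearMap.id : A →ₗ[k] A) ∘ₗ
      (TensorProduct.assoc k B A A).symm.toLinearMap

/-- (c): `ψ(b ⊗ 1_A) = 1_A ⊗ b`. -/
def psiCondC (ψ : B ⊗[k] A →ₗ[k] A ⊗[k] B) : Prop :=
  ∀ b : B, ψ (b ⊗ₜ[k] (1 : A)) = (1 : A) ⊗ₜ[k] b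

/-- (d): `ψ(1_B ⊗ a) = a ⊗ 1_B`. -/
def psiCondD (ψ : B ⊗[k] A →ₗ[k] A ⊗[k] B) : Prop :=
  ∀ a : A, ψ ((1 : B) ⊗ₜ[k] a) = a ⊗ₜ[k] (1 : B)

/-- The left action of `B` on `A` induced by `ψ` and an augmentation `ε : B → k`. -/
noncomputable def crossAct (ψ : B ⊗[k] A →ₗ[k] A ⊗[k] B) (ε : B →ₗ[k] k) (b : B) (a : A) : A :=
  (TensorProduct.rid k A)
    ((TensorProduct.map (LinearMap.id : A →ₗ[k] A) ε) (ψ (b ⊗ₜ[k] a)))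

/-- if `A #_ψ B` is a cross product algebra and `ε_B : B → k` is an algebra
homomorphism, then `b ⊗ a ↦ (id_A ⊗ ε_B)(ψ(b ⊗ a))` makes `A` a left `B`-module. -/
theorem crossAct_one_and_mul (ψ : B ⊗[k] A →ₗ[k] A ⊗[k] B)
    (hA : psiCondA ψ) (hB : psiCondB ψ) (hC : psiCondC ψ) (hD : psiCondD ψ)
    (εB : B →ₐ[k] k) :
    (∀ a : A, crossAct ψ εB.toLinearMap (1 : B) a = a) ∧
    (∀ (b b' : B) (a : A),
      crossAct ψ εB.toLinearMap (b * b') a =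
        crossAct ψ εB.toLinearMap b (crossAct ψ εB.toLinearMap b' a)) := by
  constructor
  · intro a
    unfold crossAct
    rw [hD a]
    simp
  · intro b b' a
    have key := LinearMap.congr_fun hA ((b ⊗ₜ[k] b') ⊗ₜ[k] a)
    simp only [psiCondA, LinearMap.comp_apply, TensorProduct.map_tmul,
      LinearMap.mul'_apply, LinearMap.id_coe, id_eq,
      TensorProduct.assoc_tmul, LinearEquiv.coe_coe] at key
    unfold crossAct
    rw [key]
    generalize ψ (b' ⊗ₜ[k] a) = t
    induction t using TensorProduct.induction_on with
    | zero => simp only [TensorProduct.tmul_zero, LinearEquiv.map_zero, LinearMap.map_zero, smul_zero]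
    | tmul x y =>
        simp only [TensorProduct.map_tmul, LinearMap.id_coe, id_eq,
          TensorProduct.rid_tmul, map_smul, TensorProduct.tmul_smul,
          TensorProduct.assoc_symm_tmul]
        generalize ψ (b ⊗ₜ[k] x) = s
        induction s using TensorProduct.induction_on with
        | zero => simp only [TensorProduct.zero_tmul, LinearEquiv.map_zero, LinearMap.map_zero, smul_zero]
        | tmul p q =>
            simp only [TensorProduct.map_tmul, LinearMap.id_coe, id_eq,
              TensorProduct.assoc_tmul, LinearMap.mul'_apply,
              TensorProduct.rid_tmul, AlgHom.toLinearMap_apply, map_mul]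
            rw [mul_comm, mul_smul]
        | add u v hu hv =>
            simp only [map_add, TensorProduct.add_tmul, smul_add] at *
            rw [hu, hv]
    | add u v hu hv =>
        simp only [map_add, TensorProduct.tmul_add] at *
        rw [hu, hv]
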